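/- There exists a group homomorphism ρ : B₃ → GL₆(ℂ) such that Tr(ρ(σ₁⁻²σ₂σ₁⁻¹σ₂σ₁⁻¹σ₂²)) ≠ Tr(ρ(σ₂²σ₁⁻¹σ₂σ₁⁻¹σ₂σ₁⁻²)); consequently the braid b = σ₁⁻²σ₂σ₁⁻¹σ₂σ₁⁻¹σ₂² is not conjugate in B₃ to its reversed braid b' = σ₂²σ₁⁻¹σ₂σ₁⁻¹σ₂σ₁⁻². -/

import Mathlib

open Matrix

/-- The explicit 6×6 matrix σ₁ from the paper, over ℂ with ρ a
primitive third root of unity. -/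
noncomputable def sigma1 (ρ : ℂ) : Matrix (Fin 6) (Fin 6) ℂ :=
  !![ρ+1, ρ-1, ρ-1, ρ-1, -ρ+1, -ρ+1;
     -2*ρ-1, -1, -2*ρ-1, 2*ρ+1, -2*ρ-1, 2*ρ+1;
     ρ+2, ρ+2, -ρ, ρ-2, -ρ-2, ρ+2;
     -ρ-2, -3*ρ, ρ+2, -ρ+2, 3*ρ, -ρ-2;
     ρ-1, -ρ+1, 3*ρ+3, -ρ+1, 3*ρ+1, -3*ρ-3;
     -3, -2*ρ-1, 2*ρ+1, 3, 2*ρ+1, -2*ρ-3]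

/-- The explicit 6×6 matrix σ₂ from the paper. -/
noncomputable def sigma2 (ρ : ℂ) : Matrix (Fin 6) (Fin 6) ℂ :=
  !![ρ+1, ρ-1, ρ-1, -ρ+1, ρ-1, ρ-1;
     -2*ρ-1, -1, -2*ρ-1, -2*ρ-1, 2*ρ+1, -2*ρ-1;
     ρ+2, ρ+2, -ρ, ρ+2, ρ+2, -ρ-2;
     ρ+2, 3*ρ, -ρ-2, ρ+2, 3*ρ, -ρ-2;
     -ρ+1, ρ-1, -3*ρ-3, -ρ+1, 3*ρ+1, -3*ρ-3;
     3, 2*ρ+1, -2*ρ-1, 3, 2*ρ+1, -2*ρ-3]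

def braidRels : Set (FreeGroup (Fin 2)) :=
  {FreeGroup.of 0 * FreeGroup.of 1 * FreeGroup.of 0 *
    (FreeGroup.of 1 * FreeGroup.of 0 * FreeGroup.of 1)⁻¹}

abbrev B3 := PresentedGroup braidRels

def σ (i : Fin 2) : B3 := PresentedGroup.of i

/-!
A monomial representation already separates the two braids. On `Fin n`, send `σ 0` to the cyclic
shift weighted by units `a i` and `σ 1` to the unweighted shift; the braid relation holds exactly
when `a i * a (i + 2) = a (i + 1)`, whose solutions are `6`-periodic. Both braids have total shift
`0`, so they act diagonally, with entries `(a (i - 1) * a (i - 2) ^ 3)⁻¹` and `(a i * a (i + 1) ^ 3)⁻¹`.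
For `a = (2, 3, 3/2, 1/2, 1/3, 2/3)` the traces are `86633/1296 ≠ 90413/1296`, and traces of
conjugate matrices agree.
-/

namespace Matrix

variable {n : ℕ} {R : Type*}

def weightedShift [Zero R] (k : Fin n) (d : Fin n → R) : Matrix (Fin n) (Fin n) R :=
  of fun i j => if j = i + k then d i else 0

theorem weightedShift_mul_weightedShift [NonUnitalNonAssocSemiring R] (k l : Fin n)
    (d e : Fin n → R) :
    weightedShift k d * weightedShift l e = weightedShift (k + l) fun i => d i * e (i + k) := by
  ext i j
  rw [mul_apply, Fintype.sum_eq_single (i + k) fun x hx => by simp [weightedShift, hx]]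
  simp [weightedShift, add_assoc]

variable [NeZero n]

theorem weightedShift_zero [Zero R] (d : Fin n → R) : weightedShift 0 d = diagonal d := by
  ext i j
  simp [weightedShift, diagonal, eq_comm]

def weightedShiftUnit [Semiring R] (k : Fin n) (d : Fin n → Rˣ) : GL (Fin n) R where
  val := weightedShift k fun i => d i
  inv := weightedShift (-k) fun i => ↑(d (i - k))⁻¹
  val_inv := by simp [weightedShift_mul_weightedShift, weightedShift_zero]
  inv_val := by simp [weightedShift_mul_weightedShift, weightedShift_zero, ← sub_eq_add_neg]

@[simp]
theorem coe_weightedShiftUnit [Semiring R] (k : Fin n) (d : Fin n → Rˣ) :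
    ((weightedShiftUnit k d : GL (Fin n) R) : Matrix (Fin n) (Fin n) R) =
      weightedShift k fun i => (d i : R) :=
  rfl

@[simp]
theorem coe_weightedShiftUnit_inv [Semiring R] (k : Fin n) (d : Fin n → Rˣ) :
    (↑(weightedShiftUnit k d : GL (Fin n) R)⁻¹ : Matrix (Fin n) (Fin n) R) =
      weightedShift (-k) fun i => (↑(d (i - k))⁻¹ : R) :=
  rfl

end Matrix

theorem Matrix.trace_units_eq_of_isConj {m R : Type*} [Fintype m] [DecidableEq m]
    [CommSemiring R] {u v : GL m R} (h : IsConj u v) :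
    trace (u : Matrix m m R) = trace (v : Matrix m m R) := by
  obtain ⟨c, rfl⟩ := isConj_iff.1 h
  simp [trace_units_conj]

namespace B3

section lift

variable {G : Type*} [Group G]

def lift (a b : G) (h : a * b * a = b * a * b) : B3 →* G :=
  PresentedGroup.toGroup (f := ![a, b]) <| by
    rintro r rfl
    rw [map_mul, map_inv, mul_inv_eq_one]
    simpa using h

@[simp]
theorem lift_σ_zero {a b : G} (h : a * b * a = b * a * b) : lift a b h (σ 0) = a :=
  PresentedGroup.toGroup.of _

@[simp]
theorem lift_σ_one {a b : G} (h : a * b * a = b * a * b) : lift a b h (σ 1) = b :=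
  PresentedGroup.toGroup.of _

end lift

variable {n : ℕ} [NeZero n] {R : Type*}

open Fin.CommRing in
def cyclicShiftRep [Semiring R] (a : Fin n → Rˣ) (ha : ∀ i, a i * a (i + 2) = a (i + 1)) :
    B3 →* GL (Fin n) R :=
  lift (weightedShiftUnit 1 a) (weightedShiftUnit 1 1) <| by
    ext : 1
    simp only [Units.val_mul, coe_weightedShiftUnit, weightedShift_mul_weightedShift,
      Pi.one_apply, Units.val_one, mul_one, one_mul]
    congr 1
    funext i
    rw [← ha, Units.val_mul]
    ring_nf

def braid817 : B3 := (σ 0)⁻¹ ^ 2 * σ 1 * (σ 0)⁻¹ * σ 1 * (σ 0)⁻¹ * σ 1 ^ 2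

def braid817Reverse : B3 := σ 1 ^ 2 * (σ 0)⁻¹ * σ 1 * (σ 0)⁻¹ * σ 1 * (σ 0)⁻¹ ^ 2

open Fin.CommRing in
theorem cyclicShiftRep_braid817 [CommRing R] (a : Fin n → Rˣ)
    (ha : ∀ i, a i * a (i + 2) = a (i + 1)) :
    (cyclicShiftRep a ha braid817 : Matrix (Fin n) (Fin n) R) =
      diagonal fun i => (↑(a (i - 1) * a (i - 2) ^ 3)⁻¹ : R) := by
  simp only [cyclicShiftRep, braid817, pow_two, map_mul, map_inv, lift_σ_zero, lift_σ_one,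
    Units.val_mul, coe_weightedShiftUnit, coe_weightedShiftUnit_inv,
    weightedShift_mul_weightedShift]
  rw [← weightedShift_zero]
  congr 1
  · ring
  · funext i
    simp only [mul_inv, ← inv_pow, Units.val_mul, Units.val_pow_eq_pow_val, Pi.one_apply,
      Units.val_one, mul_one]
    ring_nf

open Fin.CommRing in
theorem cyclicShiftRep_braid817Reverse [CommRing R] (a : Fin n → Rˣ)
    (ha : ∀ i, a i * a (i + 2) = a (i + 1)) :
    (cyclicShiftRep a ha braid817Reverse : Matrix (Fin n) (Fin n) R) =
      diagonal fun i => (↑(a i * a (i + 1) ^ 3)⁻¹ : R) := by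
  simp only [cyclicShiftRep, braid817Reverse, pow_two, map_mul, map_inv, lift_σ_zero,
    lift_σ_one, Units.val_mul, coe_weightedShiftUnit, coe_weightedShiftUnit_inv,
    weightedShift_mul_weightedShift]
  rw [← weightedShift_zero]
  congr 1
  · ring
  · funext i
    simp only [mul_inv, ← inv_pow, Units.val_mul, Units.val_pow_eq_pow_val, Pi.one_apply,
      Units.val_one, mul_one, one_mul]
    ring_nf

end B3

def periodSix {G : Type*} [CommGroup G] (x y : G) : Fin 6 → G :=
  ![x, y, y / x, x⁻¹, y⁻¹, x / y]

theorem periodSix_mul_add_two {G : Type*} [CommGroup G] (x y : G) (i : Fin 6) :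
    periodSix x y i * periodSix x y (i + 2) = periodSix x y (i + 1) := by
  fin_cases i <;> simp [periodSix, div_eq_mul_inv, mul_comm]

theorem braid_8_17_not_conj_to_reverse :
    (∃ φ : B3 →* Matrix.GeneralLinearGroup (Fin 6) ℂ,
      Matrix.trace ((φ ((σ 0)⁻¹ ^ 2 * σ 1 * (σ 0)⁻¹ * σ 1 * (σ 0)⁻¹ * σ 1 ^ 2) :
          Matrix.GeneralLinearGroup (Fin 6) ℂ) : Matrix (Fin 6) (Fin 6) ℂ) ≠
      Matrix.trace ((φ (σ 1 ^ 2 * (σ 0)⁻¹ * σ 1 * (σ 0)⁻¹ * σ 1 * (σ 0)⁻¹ ^ 2) :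
          Matrix.GeneralLinearGroup (Fin 6) ℂ) : Matrix (Fin 6) (Fin 6) ℂ)) ∧
    ¬ IsConj ((σ 0)⁻¹ ^ 2 * σ 1 * (σ 0)⁻¹ * σ 1 * (σ 0)⁻¹ * σ 1 ^ 2)
      (σ 1 ^ 2 * (σ 0)⁻¹ * σ 1 * (σ 0)⁻¹ * σ 1 * (σ 0)⁻¹ ^ 2) := by
  let a := periodSix (Units.mk0 (2 : ℂ) two_ne_zero) (Units.mk0 3 three_ne_zero)
  let ρ := B3.cyclicShiftRep a (periodSix_mul_add_two _ _)
  have h817 : trace (ρ B3.braid817 : Matrix (Fin 6) (Fin 6) ℂ) = 86633 / 1296 := by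
    rw [B3.cyclicShiftRep_braid817, trace_diagonal]
    simp [a, Fin.sum_univ_six, periodSix]
    norm_num
  have h817Reverse :
      trace (ρ B3.braid817Reverse : Matrix (Fin 6) (Fin 6) ℂ) = 90413 / 1296 := by
    rw [B3.cyclicShiftRep_braid817Reverse, trace_diagonal]
    simp [a, Fin.sum_univ_six, periodSix]
    norm_num
  have htrace : trace (ρ B3.braid817 : Matrix (Fin 6) (Fin 6) ℂ) ≠
      trace (ρ B3.braid817Reverse : Matrix (Fin 6) (Fin 6) ℂ) := by
    rw [h817, h817Reverse]
    norm_num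
  exact ⟨⟨ρ, htrace⟩, fun h => htrace (trace_units_eq_of_isConj (ρ.map_isConj h))⟩
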